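/- Let P be a Polish space and ψ a map from P into the set of trees on ℕ such that for every finite sequence s of natural numbers the set {x ∈ P : s ∈ ψ(x)} is Borel in P. Then the set C = {x ∈ P : ψ(x) is well-founded} is Borel in P if and only if sup_{x ∈ C} h(ψ(x)) is a countable ordinal, i.e., there exists a countable ordinal α with h(ψ(x)) ≤ α for all x ∈ C. -/

import Mathlib

open Filter Topology

/-- The `n`-th Cesàro mean `A_n = (1/n) ∑_{k<n} T^k` of an operator `T`. -/
noncomputable def cesaroMean {X : Type*} [NormedAddCommGroup X] [NormedSpace ℝ X]
    (T : X →L[ℝ] X) (n : ℕ) : X →L[ℝ] X :=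
  (n : ℝ)⁻¹ • ∑ k ∈ Finset.range n, T ^ k

/-- The strong operator topology on `L(X)`: the topology of pointwise convergence,
induced from the product topology on `X → X`. -/
def sot (X : Type*) [NormedAddCommGroup X] [NormedSpace ℝ X] : TopologicalSpace (X →L[ℝ] X) :=
  TopologicalSpace.induced (fun T => (T : X → X)) Pi.topologicalSpace

/-- `T` is Cesàro-bounded if the norms of its Cesàro means are uniformly bounded. -/
def CesaroBounded {X : Type*} [NormedAddCommGroup X] [NormedSpace ℝ X]
    (T : X →L[ℝ] X) : Prop :=
  ∃ M : ℝ, ∀ n : ℕ, ‖cesaroMean T n‖ ≤ M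

/-- `T` is ergodic if for every `x` the sequence of Cesàro means at `x` converges in norm. -/
def IsErgodicOp {X : Type*} [NormedAddCommGroup X] [NormedSpace ℝ X]
    (T : X →L[ℝ] X) : Prop :=
  ∀ x : X, ∃ y : X, Tendsto (fun n => cesaroMean T n x) atTop (𝓝 y)

/-- `T` is uniformly ergodic if the sequence of Cesàro means converges in operator norm. -/
def IsUniformlyErgodicOp {X : Type*} [NormedAddCommGroup X] [NormedSpace ℝ X]
    (T : X →L[ℝ] X) : Prop :=
  ∃ L : X →L[ℝ] X, Tendsto (fun n => cesaroMean T n) atTop (𝓝 L)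

/-- Condition (NSE): there are `ε > 0` and a strictly increasing sequence `j` such that
for every `m` some `x` in the unit ball satisfies `‖A_{j_p} x - A_{j_{p+1}} x‖ > ε`
for all `p ≤ m`. -/
def NSE {X : Type*} [NormedAddCommGroup X] [NormedSpace ℝ X]
    (T : X →L[ℝ] X) : Prop :=
  ∃ ε > (0 : ℝ), ∃ j : ℕ → ℕ, StrictMono j ∧
    ∀ m : ℕ, ∃ x : X, ‖x‖ ≤ 1 ∧
      ∀ p ≤ m, ε < ‖cesaroMean T (j p) x - cesaroMean T (j (p + 1)) x‖

/-- The tree `𝒜_e(T, ε)`: finite strictly increasing sequences `s` of naturals such that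
`|s| ≤ 1` or some `x` in the unit ball satisfies `‖A_{s_p} x - A_{s_{p+1}} x‖ > ε`
for all consecutive pairs of entries of `s`. -/
def ergoTree {X : Type*} [NormedAddCommGroup X] [NormedSpace ℝ X]
    (T : X →L[ℝ] X) (ε : ℝ) : Set (List ℕ) :=
  {s | s.Chain' (· < ·) ∧ (s.length ≤ 1 ∨ ∃ x : X, ‖x‖ ≤ 1 ∧
    ∀ p : ℕ, p + 1 < s.length →
      ε < ‖cesaroMean T (s.getD p 0) x - cesaroMean T (s.getD (p + 1) 0) x‖)}

/-- A tree on `ℕ` (a set of finite sequences) is well-founded if it has no infinite branch. -/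
def TreeWF (𝒜 : Set (List ℕ)) : Prop :=
  ¬ ∃ J : ℕ → ℕ, ∀ m : ℕ, (List.range m).map J ∈ 𝒜

/-- The relation "is a proper extension of", restricted to the nodes of the tree `𝒜`. -/
def treeRel (𝒜 : Set (List ℕ)) : List ℕ → List ℕ → Prop :=
  fun t s => s ∈ 𝒜 ∧ t ∈ 𝒜 ∧ s <+: t ∧ s ≠ t

open Classical in
/-- The height of a well-founded tree: the ordinal rank of the relation
"is a proper extension of" on its nodes, evaluated at the empty sequence
(and `0` by convention if that relation is not well-founded). -/
noncomputable def treeHeight (𝒜 : Set (List ℕ)) : Ordinal :=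
  if h : WellFounded (treeRel 𝒜) then (h.apply []).rank else 0

/-!
If the heights are bounded by a countable `α`, then `C` is the set of `x` at which the root of
`ψ x` has rank at most `α`. By recursion on `α` this set is obtained from the Borel sets
`{x | s ∈ ψ x}` by countable unions and intersections, so it is Borel.

Conversely, suppose `C` is Borel while the heights are unbounded below `ω₁`. A tree `A` on `ℕ` is
then well-founded iff it admits a tree homomorphism into `ψ x` for some `x ∈ C`: one direction
because ranks are countable, so some `ψ x` is taller than `A`; the other because a branch of `A`
would map to a branch of `ψ x`. Coding homomorphisms by points of Baire space, the set of `x`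
with `codeTree x x` well-founded is the projection of a Borel set, hence analytic. But it is the
complement of the diagonal of a universal analytic set, which cannot be analytic.
-/

open MeasureTheory Ordinal

def IsTree (A : Set (List ℕ)) : Prop :=
  ∀ s t : List ℕ, s <+: t → t ∈ A → s ∈ A

def IsTreeHom (A B : Set (List ℕ)) (f : List ℕ → List ℕ) : Prop :=
  ∀ s n, s ++ [n] ∈ A → treeRel B (f (s ++ [n])) (f s)

section Trees

variable {A B : Set (List ℕ)}

lemma List.IsPrefix.length_lt_of_ne {α : Type*} {s t : List α} (h : s <+: t) (hne : s ≠ t) :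
    s.length < t.length :=
  h.length_le.lt_of_ne fun hl => hne (h.eq_of_length hl)

lemma List.IsPrefix.append_getD_prefix {s u : List ℕ} (h : s <+: u) (hl : s.length < u.length) :
    s ++ [u.getD s.length 0] <+: u := by
  rw [List.getD_eq_getElem _ _ hl]
  calc s ++ [u[s.length]] = u.take (s.length + 1) := by
        rw [← List.take_append_getElem hl, ← List.prefix_iff_eq_take.1 h]
    _ <+: u := List.take_prefix _ _

lemma map_range_succ {α : Type*} (J : ℕ → α) (m : ℕ) :
    (List.range (m + 1)).map J = (List.range m).map J ++ [J m] := by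
  simp [List.range_succ]

lemma take_map_range {α : Type*} (z : ℕ → α) {k m : ℕ} (hk : k ≤ m) :
    ((List.range m).map z).take k = (List.range k).map z := by
  rw [← List.map_take, List.take_range, min_eq_left hk]

lemma map_range_eq_map_range_iff {α : Type*} {f g : ℕ → α} {k : ℕ} :
    (List.range k).map f = (List.range k).map g ↔ ∀ i < k, f i = g i := by
  simp [List.map_inj_left]

lemma treeRel_append_singleton {s : List ℕ} {n : ℕ} (hs : s ∈ A) (hsn : s ++ [n] ∈ A) :
    treeRel A (s ++ [n]) s :=
  ⟨hs, hsn, List.prefix_append _ _, by simp⟩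

lemma treeRel_map_range_succ {J : ℕ → ℕ} (hJ : ∀ m, (List.range m).map J ∈ A) (m : ℕ) :
    treeRel A ((List.range (m + 1)).map J) ((List.range m).map J) := by
  rw [map_range_succ]
  exact treeRel_append_singleton (hJ m) (map_range_succ J m ▸ hJ (m + 1))

lemma IsTree.exists_branch_of_descending (hA : IsTree A) {F : ℕ → List ℕ}
    (hF : ∀ m, treeRel A (F (m + 1)) (F m)) : ∃ J : ℕ → ℕ, ∀ m, (List.range m).map J ∈ A := by
  have hprefix : ∀ {a b}, a ≤ b → F a <+: F b := fun hab => by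
    induction hab with
    | refl => exact List.prefix_refl _
    | step _ ih => exact ih.trans (hF _).2.2.1
  have hlen : ∀ m, m ≤ (F m).length := fun m => by
    induction m with
    | zero => exact Nat.zero_le _
    | succ m ih => exact ih.trans_lt ((hF m).2.2.1.length_lt_of_ne (hF m).2.2.2)
  refine ⟨fun k => (F (k + 1)).getD k 0, fun m => hA _ (F m) ?_ (hF m).1⟩
  induction m with
  | zero => exact List.nil_prefix
  | succ m ih =>
    have h := ih.trans (hprefix m.le_succ)
    rw [map_range_succ]
    simpa using h.append_getD_prefix (by simpa using hlen (m + 1))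

lemma IsTree.treeWF_iff_wellFounded (hA : IsTree A) : TreeWF A ↔ WellFounded (treeRel A) := by
  rw [wellFounded_iff_isEmpty_descending_chain, TreeWF, isEmpty_subtype]
  refine ⟨fun h F hF => h (hA.exists_branch_of_descending hF), fun h ⟨J, hJ⟩ => ?_⟩
  exact h _ (treeRel_map_range_succ hJ)

lemma IsTreeHom.treeWF {f : List ℕ → List ℕ} (hf : IsTreeHom A B f)
    (hB : WellFounded (treeRel B)) : TreeWF A := by
  rintro ⟨J, hJ⟩
  refine (wellFounded_iff_isEmpty_descending_chain.1 hB).false ⟨fun m => f ((List.range m).map J),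
    fun m => ?_⟩
  dsimp only
  rw [map_range_succ]
  exact hf _ _ (map_range_succ J m ▸ hJ (m + 1))

end Trees

section Rank

open IsWellFounded (rank rank_eq rank_lt_of_rel)

lemma IsWellFounded.rank_lt_omega_one {α : Type*} [Countable α] (r : α → α → Prop)
    [IsWellFounded α r] (a : α) : rank r a < ω₁ := by
  induction a using IsWellFounded.induction r with
  | _ a ih =>
    rw [rank_eq]
    exact Ordinal.iSup_lt_omega_one fun b => (Cardinal.isSuccLimit_omega 1).succ_lt (ih b b.2)

variable {A B : Set (List ℕ)}

lemma treeHeight_eq_rank [IsWellFounded (List ℕ) (treeRel A)] :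
    treeHeight A = rank (treeRel A) [] :=
  dif_pos IsWellFounded.wf

lemma IsTree.rank_le_rank_of_prefix (hA : IsTree A) [IsWellFounded (List ℕ) (treeRel A)]
    {s t : List ℕ} (hst : s <+: t) (ht : t ∈ A) : rank (treeRel A) t ≤ rank (treeRel A) s := by
  rcases eq_or_ne s t with rfl | hne
  · rfl
  · exact (rank_lt_of_rel ⟨hA s t hst ht, ht, hst, hne⟩).le

lemma IsTree.exists_child_of_lt_rank (hA : IsTree A) [IsWellFounded (List ℕ) (treeRel A)]
    {u : List ℕ} {γ : Ordinal} (h : γ < rank (treeRel A) u) :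
    u ∈ A ∧ ∃ n, u ++ [n] ∈ A ∧ γ ≤ rank (treeRel A) (u ++ [n]) := by
  rw [rank_eq, Ordinal.lt_iSup_iff] at h
  obtain ⟨⟨t, hu, ht, hut, hne⟩, hγ⟩ := h
  have hchild := hut.append_getD_prefix (hut.length_lt_of_ne hne)
  exact ⟨hu, _, hA _ _ hchild ht,
    (Order.lt_succ_iff.1 hγ).trans (hA.rank_le_rank_of_prefix hchild ht)⟩

lemma List.exists_append_singleton_rec {α β : Type*} (c : List α → α → List β → β) :
    ∃ f : List α → List β, f [] = [] ∧ ∀ l a, f (l ++ [a]) = f l ++ [c l a (f l)] :=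
  ⟨fun s => s.reverseRecOn [] fun l a u => u ++ [c l a u], List.reverseRecOn_nil _ _,
    fun _ _ => List.reverseRecOn_concat _ _ _ _⟩

/-- A tree homomorphism is built one level at a time, keeping the rank of the image node
at least the rank of the source node. -/
lemma exists_isTreeHom_of_rank_le (hA : IsTree A) (hB : IsTree B)
    [IsWellFounded (List ℕ) (treeRel A)] [IsWellFounded (List ℕ) (treeRel B)] (hnil : [] ∈ B)
    (h : rank (treeRel A) [] ≤ rank (treeRel B) []) : ∃ f, IsTreeHom A B f := by
  obtain ⟨f, hf_nil, hf_snoc⟩ := List.exists_append_singleton_rec fun l a u =>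
    Classical.epsilon fun m =>
      u ++ [m] ∈ B ∧ rank (treeRel A) (l ++ [a]) ≤ rank (treeRel B) (u ++ [m])
  have hstep : ∀ l a, l ++ [a] ∈ A → f l ∈ B → rank (treeRel A) l ≤ rank (treeRel B) (f l) →
      f (l ++ [a]) ∈ B ∧ rank (treeRel A) (l ++ [a]) ≤ rank (treeRel B) (f (l ++ [a])) := by
    intro l a hla hl hrank
    have hlt := (rank_lt_of_rel (treeRel_append_singleton (hA _ _ (List.prefix_append _ _) hla)
      hla)).trans_le hrank
    obtain ⟨-, n, hn⟩ := hB.exists_child_of_lt_rank hlt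
    rw [hf_snoc]
    exact Classical.epsilon_spec (p := fun m =>
      f l ++ [m] ∈ B ∧ rank (treeRel A) (l ++ [a]) ≤ rank (treeRel B) (f l ++ [m])) ⟨n, hn⟩
  have hinv : ∀ s ∈ A, f s ∈ B ∧ rank (treeRel A) s ≤ rank (treeRel B) (f s) := by
    intro s
    induction s using List.reverseRecOn with
    | nil =>
      intro _
      rw [hf_nil]
      exact ⟨hnil, h⟩
    | append_singleton l a ih =>
      intro hla
      obtain ⟨hl, hrank⟩ := ih (hA _ _ (List.prefix_append _ _) hla)
      exact hstep l a hla hl hrank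
  refine ⟨f, fun s n hsn => ?_⟩
  obtain ⟨hs, hrank⟩ := hinv s (hA _ _ (List.prefix_append _ _) hsn)
  refine ⟨hs, (hstep s n hsn hs hrank).1, ?_, ?_⟩ <;> rw [hf_snoc]
  · exact List.prefix_append _ _
  · simp

end Rank

section RankHierarchy

open IsWellFounded (rank rank_lt_of_rel)

variable {P : Type*} (ψ : P → Set (List ℕ))

/-- `x ∈ rankLE ψ α s` iff the node `s` has rank at most `α` in `ψ x` (rank `0` if `s ∉ ψ x`). -/
def rankLE (α : Ordinal) (s : List ℕ) : Set P :=
  {x | s ∈ ψ x → ∀ n, s ++ [n] ∈ ψ x → ∃ β : Set.Iio α, x ∈ rankLE β (s ++ [n])}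
termination_by α
decreasing_by exact β.2

lemma mem_rankLE_iff {α : Ordinal} {s : List ℕ} {x : P} :
    x ∈ rankLE ψ α s ↔
      (s ∈ ψ x → ∀ n, s ++ [n] ∈ ψ x → ∃ β : Set.Iio α, x ∈ rankLE ψ β (s ++ [n])) := by
  rw [rankLE]
  rfl

lemma countable_Iio_of_lt_omega_one {α : Ordinal} (hα : α < ω₁) : (Set.Iio α).Countable := by
  rw [← Set.countable_coe_iff, ← Cardinal.mk_le_aleph0_iff, Cardinal.mk_Iio_ordinal,
    Cardinal.lift_le_aleph0, ← Cardinal.lt_aleph_one_iff, ← Cardinal.lt_omega_iff_card_lt]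
  exact hα

lemma measurableSet_rankLE [MeasurableSpace P] (hψ : ∀ s, MeasurableSet {x | s ∈ ψ x})
    {α : Ordinal} (hα : α < ω₁) (s : List ℕ) : MeasurableSet (rankLE ψ α s) := by
  induction α using WellFoundedLT.induction generalizing s with
  | ind α ih =>
    have : Countable (Set.Iio α) := (countable_Iio_of_lt_omega_one hα).to_subtype
    rw [show rankLE ψ α s = {x | _} from Set.ext fun _ => mem_rankLE_iff ψ, measurableSet_setOfPred]
    exact (hψ s).mem.imp <| .forall fun n => (hψ _).mem.imp <| .exists fun β =>
      (ih β β.2 (β.2.trans hα) _).mem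

lemma acc_of_mem_rankLE (hψ : ∀ x, IsTree (ψ x)) {x : P} {α : Ordinal} {s : List ℕ}
    (h : x ∈ rankLE ψ α s) {t : List ℕ} (hst : s <+: t) : Acc (treeRel (ψ x)) t := by
  induction α using WellFoundedLT.induction generalizing s t with
  | ind α ih =>
    refine Acc.intro t fun u ⟨ht, hu, htu, hne⟩ => ?_
    have hsu := hst.trans htu
    have hchild := hsu.append_getD_prefix (hst.length_le.trans_lt (htu.length_lt_of_ne hne))
    obtain ⟨β, hβ⟩ := (mem_rankLE_iff ψ).1 h (hψ x _ _ hsu hu) _ (hψ x _ _ hchild hu)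
    exact ih β β.2 hβ hchild

lemma mem_rankLE_of_rank_le {x : P} [IsWellFounded (List ℕ) (treeRel (ψ x))] {α : Ordinal}
    {s : List ℕ} (h : rank (treeRel (ψ x)) s ≤ α) : x ∈ rankLE ψ α s := by
  induction α using WellFoundedLT.induction generalizing s with
  | ind α ih =>
    refine (mem_rankLE_iff ψ).2 fun hs n hsn => ?_
    have hlt := (rank_lt_of_rel (treeRel_append_singleton hs hsn)).trans_le h
    exact ⟨⟨_, hlt⟩, ih _ hlt le_rfl⟩

theorem measurableSet_setOf_treeWF_of_bounded [MeasurableSpace P] (hψ : ∀ x, IsTree (ψ x))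
    (hborel : ∀ s, MeasurableSet {x | s ∈ ψ x}) {α : Ordinal} (hα : α < ω₁)
    (hbound : ∀ x, TreeWF (ψ x) → treeHeight (ψ x) ≤ α) :
    MeasurableSet {x | TreeWF (ψ x)} := by
  convert measurableSet_rankLE ψ hborel hα []
  ext x
  refine ⟨fun hx => ?_, fun hx => ?_⟩
  · have : IsWellFounded (List ℕ) (treeRel (ψ x)) := ⟨(hψ x).treeWF_iff_wellFounded.1 hx⟩
    exact mem_rankLE_of_rank_le ψ (treeHeight_eq_rank (A := ψ x) ▸ hbound x hx)
  · exact (hψ x).treeWF_iff_wellFounded.2 ⟨fun t => acc_of_mem_rankLE ψ hψ hx List.nil_prefix⟩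

end RankHierarchy

section Coding

open Encodable Denumerable

lemma exists_code {α : Type*} [Encodable α] (S : Set α) :
    ∃ y : ℕ → ℕ, ∀ p, y (encode p) = 0 ↔ p ∈ S := by
  classical
  exact ⟨fun n => if n ∈ encode '' S then 0 else 1, fun p => by
    simp [encode_injective.mem_set_image]⟩

lemma mem_range_iff_forall_exists_map_range_eq {g : (ℕ → ℕ) → ℕ → ℕ} (hg : Continuous g)
    (x : ℕ → ℕ) :
    x ∈ Set.range g ↔ ∃ z, ∀ k, ∃ z', (List.range k).map z' = (List.range k).map z ∧
      (List.range k).map (g z') = (List.range k).map x := by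
  refine ⟨fun ⟨z, hz⟩ => ⟨z, fun k => ⟨z, rfl, hz ▸ rfl⟩⟩, fun ⟨z, hz⟩ => ?_⟩
  choose z' hz₁ hz₂ using hz
  simp only [map_range_eq_map_range_iff] at hz₁ hz₂
  have hlim : Tendsto z' atTop (𝓝 z) := tendsto_pi_nhds.2 fun i =>
    tendsto_nhds_of_eventually_eq ((eventually_gt_atTop i).mono fun k hk => hz₁ k i hk)
  refine ⟨z, funext fun i => tendsto_nhds_unique
    (((continuous_apply i).tendsto _).comp ((hg.tendsto z).comp hlim))
    (tendsto_nhds_of_eventually_eq ((eventually_gt_atTop i).mono fun k hk => hz₂ k i hk))⟩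

/-- If `y` codes a set `S` of pairs of finite sequences, `codeTree y x` is the tree of `s` with
`(s|k, x|k) ∈ S` for all `k ≤ |s|`. -/
def codeTree (y x : ℕ → ℕ) : Set (List ℕ) :=
  {s | ∀ k ≤ s.length, y (encode (s.take k, (List.range k).map x)) = 0}

lemma isTree_codeTree (y x : ℕ → ℕ) : IsTree (codeTree y x) := by
  intro s t hst ht k hk
  rw [List.prefix_iff_eq_take.1 hst, List.take_take, min_eq_left hk]
  exact ht k (hk.trans hst.length_le)

lemma not_treeWF_codeTree_iff {y x : ℕ → ℕ} :
    ¬TreeWF (codeTree y x) ↔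
      ∃ z : ℕ → ℕ, ∀ k, y (encode ((List.range k).map z, (List.range k).map x)) = 0 := by
  simp only [TreeWF, not_not, codeTree, Set.mem_ofPred_eq, List.length_map, List.length_range]
  refine exists_congr fun z => ⟨fun h k => ?_, fun h m k hk => ?_⟩
  · simpa [take_map_range z le_rfl] using h k k le_rfl
  · simpa [take_map_range z hk] using h k

lemma exists_codeTree_of_analyticSet {A : Set (ℕ → ℕ)} (hA : AnalyticSet A) :
    ∃ y, ∀ x, x ∈ A ↔ ¬TreeWF (codeTree y x) := by
  rw [AnalyticSet_def] at hA
  rcases hA with rfl | ⟨g, hg, rfl⟩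
  · exact ⟨fun _ => 1, fun x => by simp [not_treeWF_codeTree_iff]⟩
  obtain ⟨y, hy⟩ := exists_code {p : List ℕ × List ℕ |
    ∃ z k, (List.range k).map z = p.1 ∧ (List.range k).map (g z) = p.2}
  refine ⟨y, fun x => ?_⟩
  rw [not_treeWF_codeTree_iff, mem_range_iff_forall_exists_map_range_eq hg]
  simp only [hy, Set.mem_ofPred_eq]
  refine exists_congr fun z => forall_congr' fun k =>
    ⟨fun ⟨z', h₁, h₂⟩ => ⟨z', k, h₁, h₂⟩, fun ⟨z', k', h₁, h₂⟩ => ?_⟩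
  obtain rfl : k' = k := by simpa using congrArg List.length h₁
  exact ⟨z', h₁, h₂⟩

lemma not_analyticSet_setOf_treeWF_codeTree :
    ¬AnalyticSet {x : ℕ → ℕ | TreeWF (codeTree x x)} := fun h =>
  have ⟨y, hy⟩ := exists_codeTree_of_analyticSet h
  iff_not_self (hy y)

lemma measurable_dependent_of_countable {X α β : Type*} [MeasurableSpace X] [MeasurableSpace α]
    [MeasurableSpace β] [Countable α] [MeasurableSingletonClass α] {f : X → α} (hf : Measurable f)
    {g : α → X → β} (hg : ∀ a, Measurable (g a)) : Measurable fun x => g (f x) x :=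
  (measurable_from_prod_countable_right (f := fun q : α × X => g q.1 q.2) hg).comp
    (hf.prodMk measurable_id)

lemma measurableSet_setOf_mem_codeTree (s : List ℕ) :
    MeasurableSet {x : ℕ → ℕ | s ∈ codeTree x x} := by
  have hofFn (k : ℕ) (x : ℕ → ℕ) : (List.range k).map x = List.ofFn fun i : Fin k => x i :=
    List.ext_getElem (by simp) (by simp)
  simp only [codeTree, Set.mem_ofPred_eq, hofFn, measurableSet_setOfPred]
  refine .forall fun k => measurable_const.imp ?_
  exact measurable_dependent_of_countable (f := fun (x : ℕ → ℕ) (i : Fin k) => x i)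
    (g := fun c (x : ℕ → ℕ) => x (encode (s.take k, List.ofFn c)) = 0)
    (measurable_pi_lambda _ fun i => measurable_pi_apply _)
    fun _ => (measurable_pi_apply _).eq_const 0

lemma measurableSet_setOf_treeRel {W : Type*} [MeasurableSpace W] {B : W → Set (List ℕ)}
    (hB : ∀ s, MeasurableSet {w | s ∈ B w}) (u v : List ℕ) :
    MeasurableSet {w | treeRel (B w) u v} :=
  (hB v).inter ((hB u).inter (.const _))

lemma measurableSet_setOf_isTreeHom {W : Type*} [MeasurableSpace W] {A B : W → Set (List ℕ)}
    (hA : ∀ s, MeasurableSet {w | s ∈ A w}) (hB : ∀ s, MeasurableSet {w | s ∈ B w})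
    {F : W → ℕ → ℕ} (hF : Measurable F) :
    MeasurableSet {w | IsTreeHom (A w) (B w) fun s => ofNat (List ℕ) (F w (encode s))} := by
  rw [measurableSet_setOfPred]
  refine .forall fun s => .forall fun n => (hA _).mem.imp ?_
  exact measurable_dependent_of_countable (f := fun w => (F w (encode (s ++ [n])), F w (encode s)))
    (g := fun q w => treeRel (B w) (ofNat (List ℕ) q.1) (ofNat (List ℕ) q.2))
    (by fun_prop) fun q => (measurableSet_setOf_treeRel hB _ _).mem

end Coding

section Unbounded

open Encodable Denumerable

variable {P : Type*} (ψ : P → Set (List ℕ))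

lemma treeWF_iff_exists_isTreeHom (hψ : ∀ x, IsTree (ψ x))
    (hunb : ∀ α < ω₁, ∃ x, TreeWF (ψ x) ∧ α < treeHeight (ψ x)) {A : Set (List ℕ)}
    (hA : IsTree A) : TreeWF A ↔ ∃ x, TreeWF (ψ x) ∧ ∃ f, IsTreeHom A (ψ x) f := by
  refine ⟨fun h => ?_, fun ⟨x, hx, f, hf⟩ => hf.treeWF ((hψ x).treeWF_iff_wellFounded.1 hx)⟩
  have : IsWellFounded (List ℕ) (treeRel A) := ⟨hA.treeWF_iff_wellFounded.1 h⟩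
  obtain ⟨x, hx, hlt⟩ := hunb _ (IsWellFounded.rank_lt_omega_one (treeRel A) [])
  have : IsWellFounded (List ℕ) (treeRel (ψ x)) := ⟨(hψ x).treeWF_iff_wellFounded.1 hx⟩
  rw [treeHeight_eq_rank] at hlt
  exact ⟨x, hx, exists_isTreeHom_of_rank_le hA (hψ x) ((hψ x).exists_child_of_lt_rank hlt).1
    hlt.le⟩

theorem bounded_treeHeight_of_measurableSet [TopologicalSpace P] [PolishSpace P]
    [MeasurableSpace P] [BorelSpace P] (hψ : ∀ x, IsTree (ψ x))
    (hborel : ∀ s, MeasurableSet {x | s ∈ ψ x}) (hC : MeasurableSet {x | TreeWF (ψ x)}) :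
    ∃ α < ω₁, ∀ x, TreeWF (ψ x) → treeHeight (ψ x) ≤ α := by
  by_contra! hunb
  apply not_analyticSet_setOf_treeWF_codeTree
  have hE : MeasurableSet {w : (ℕ → ℕ) × P × (ℕ → ℕ) | TreeWF (ψ w.2.1) ∧
      IsTreeHom (codeTree w.1 w.1) (ψ w.2.1) fun s => ofNat (List ℕ) (w.2.2 (encode s))} :=
    (measurable_fst.comp measurable_snd hC).inter <| measurableSet_setOf_isTreeHom
      (fun s => measurable_fst (measurableSet_setOf_mem_codeTree s))
      (fun s => measurable_fst.comp measurable_snd (hborel s)) (measurable_snd.comp measurable_snd)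
  convert hE.analyticSet_image measurable_fst
  ext x
  rw [Set.mem_ofPred_eq, treeWF_iff_exists_isTreeHom ψ hψ hunb (isTree_codeTree x x)]
  constructor
  · rintro ⟨x', hx', f, hf⟩
    exact ⟨(x, x', fun n => encode (f (ofNat (List ℕ) n))), ⟨hx', by simpa using hf⟩, rfl⟩
  · rintro ⟨⟨_, x', F⟩, ⟨hx', hF⟩, rfl⟩
    exact ⟨x', hx', _, hF⟩

end Unbounded

/-- If `ψ` maps a Polish space into trees on `ℕ` and each `{x | s ∈ ψ x}` is Borel, then
`C = {x | ψ x is well-founded}` is Borel iff the heights `h(ψ x)`, `x ∈ C`, are bounded by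
a countable ordinal. -/
theorem stmt_11 (P : Type*) [TopologicalSpace P] [PolishSpace P]
    [MeasurableSpace P] [BorelSpace P]
    (ψ : P → Set (List ℕ))
    (htree : ∀ x : P, ∀ s t : List ℕ, s <+: t → t ∈ ψ x → s ∈ ψ x)
    (hborel : ∀ s : List ℕ, MeasurableSet {x : P | s ∈ ψ x}) :
    MeasurableSet {x : P | TreeWF (ψ x)} ↔
      ∃ α : Ordinal, α < (Cardinal.aleph 1).ord ∧
        ∀ x : P, TreeWF (ψ x) → treeHeight (ψ x) ≤ α := by
  rw [Cardinal.ord_aleph]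
  exact ⟨bounded_treeHeight_of_measurableSet ψ htree hborel,
    fun ⟨_, hα, hbound⟩ => measurableSet_setOf_treeWF_of_bounded ψ htree hborel hα hbound⟩
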